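/- Equality H_RPS(M) = log K(N) holds if and only if M(A_{ij}) = (F(i)-1)/K(N) for every permutation event A_{ij} of length i, 1 ≤ i ≤ N, where K(N) = ∑_{i=1}^{N} P(N,i)(F(i)-1). -/

import Mathlib

def P (n k : ℕ) : ℕ := n.factorial / (n - k).factorial

def F (i : ℕ) : ℕ := ∑ k ∈ Finset.range (i + 1), P i k

def K (N : ℕ) : ℕ := ∑ i ∈ Finset.Icc 1 N, P N i * (F i - 1)

open Real Finset in
lemma gibbs_aux {a b : ℝ} (ha : 0 ≤ a) (hb : 0 < b) :
    0 ≤ a * Real.log (a / b) - a + b ∧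
      (a * Real.log (a / b) - a + b = 0 ↔ a = b) := by
  rcases eq_or_lt_of_le ha with h0 | h0
  · simp [← h0]
    constructor
    · linarith
    · constructor
      · intro h; linarith
      · intro h; linarith
  · have hba : 0 < b / a := div_pos hb h0
    have key : Real.log (b / a) ≤ b / a - 1 := Real.log_le_sub_one_of_pos hba
    have hlog : Real.log (a / b) = - Real.log (b / a) := by
      rw [← Real.log_inv]
      congr 1
      field_simp
    have hexp : a * Real.log (a / b) - a + b = a * (b / a - 1 - Real.log (b / a)) := by
      rw [hlog]; field_simp; ring
    constructor
    · rw [hexp]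
      have := Real.log_le_sub_one_of_pos hba
      nlinarith
    · constructor
      · intro h
        by_contra hne
        have hne' : b / a ≠ 1 := by
          intro h1
          apply hne
          field_simp at h1
          linarith
        have := Real.log_lt_sub_one_of_pos hba hne'
        rw [hexp] at h
        have : a * (b / a - 1 - Real.log (b / a)) > 0 :=
          mul_pos h0 (by linarith)
        linarith
      · intro h
        subst h
        rw [div_self (ne_of_gt h0)]
        simp

open Real Finset in
lemma gibbs {ι : Type*} (s : Finset ι) (f w : ι → ℝ)
    (hf : ∀ i ∈ s, 0 ≤ f i) (hw : ∀ i ∈ s, 0 < w i)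
    (hfs : ∑ i ∈ s, f i = 1) (hws : ∑ i ∈ s, w i = 1) :
    (∑ i ∈ s, f i * Real.log (f i / w i) = 0) ↔ ∀ i ∈ s, f i = w i := by
  have key : ∑ i ∈ s, f i * Real.log (f i / w i)
      = ∑ i ∈ s, (f i * Real.log (f i / w i) - f i + w i) := by
    rw [Finset.sum_add_distrib, Finset.sum_sub_distrib, hfs, hws]
    ring
  rw [key]
  rw [Finset.sum_eq_zero_iff_of_nonneg (fun i hi => (gibbs_aux (hf i hi) (hw i hi)).1)]
  constructor
  · intro h i hi
    exact ((gibbs_aux (hf i hi) (hw i hi)).2).1 (h i hi)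
  · intro h i hi
    exact ((gibbs_aux (hf i hi) (hw i hi)).2).2 (h i hi)

lemma F_ge_two {i : ℕ} (hi : 1 ≤ i) : 2 ≤ F i := by
  have h0 : P i 0 = 1 := by simp [P, Nat.div_self (Nat.factorial_pos i)]
  have h1 : 1 ≤ P i i := by
    have : P i i = i.factorial := by
      simp only [P, Nat.sub_self, Nat.factorial_zero, Nat.div_one]
    rw [this]; exact Nat.one_le_iff_ne_zero.2 (Nat.factorial_ne_zero i)
  have hsub : ({0, i} : Finset ℕ) ⊆ Finset.range (i + 1) := by
    intro x hx
    simp only [Finset.mem_insert, Finset.mem_singleton] at hx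
    rcases hx with rfl | rfl <;> simp [Nat.lt_succ_iff]
  have hne : (0 : ℕ) ≠ i := by omega
  calc 2 ≤ P i 0 + P i i := by
        omega
    _ = ∑ k ∈ ({0, i} : Finset ℕ), P i k := by
        rw [Finset.sum_insert (by simp [hne]), Finset.sum_singleton]
    _ ≤ ∑ k ∈ Finset.range (i + 1), P i k := Finset.sum_le_sum_of_subset hsub
    _ = F i := rfl

lemma P_pos {n k : ℕ} (hk : k ≤ n) : 0 < P n k := by
  have := Nat.factorial_dvd_factorial (Nat.sub_le n k)
  exact Nat.div_pos (Nat.le_of_dvd (Nat.factorial_pos n) this) (Nat.factorial_pos _)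

lemma K_pos {N : ℕ} (hN : 1 ≤ N) : 0 < K N := by
  have h1 : (1 : ℕ) ∈ Finset.Icc 1 N := by simp [hN]
  have : 0 < P N 1 * (F 1 - 1) := by
    have := P_pos (n := N) (k := 1) hN
    have := F_ge_two (i := 1) le_rfl
    have h : 1 ≤ F 1 - 1 := by omega
    exact Nat.mul_pos ‹0 < P N 1› (by omega)
  calc 0 < P N 1 * (F 1 - 1) := this
    _ ≤ K N := Finset.single_le_sum (f := fun i => P N i * (F i - 1)) (fun i _ => Nat.zero_le _) h1

/-- Equality H_RPS(M) = log K(N) holds iff M(A_{ij}) = (F(i)-1)/K(N) for every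
permutation event of length 1 ≤ i ≤ N. -/
theorem RPS_entropy_eq_max_iff (N : ℕ) (hN : 1 ≤ N) (M : ℕ → ℕ → ℝ)
    (hM0 : ∀ i j, 0 ≤ M i j)
    (hMsum : ∑ i ∈ Finset.Icc 1 N, ∑ j ∈ Finset.range (P N i), M i j = 1) :
    (-∑ i ∈ Finset.Icc 1 N, ∑ j ∈ Finset.range (P N i),
        M i j * Real.log (M i j / ((F i - 1 : ℕ) : ℝ))
      = Real.log (K N : ℝ))
    ↔ ∀ i ∈ Finset.Icc 1 N, ∀ j ∈ Finset.range (P N i),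
        M i j = ((F i - 1 : ℕ) : ℝ) / (K N : ℝ) := by
  classical
  have hK : 0 < K N := K_pos hN
  have hKR : (0 : ℝ) < (K N : ℝ) := by exact_mod_cast hK
  set s : Finset ((_ : ℕ) × ℕ) := (Finset.Icc 1 N).sigma (fun i => Finset.range (P N i)) with hs
  set f : (_ : ℕ) × ℕ → ℝ := fun p => M p.1 p.2 with hf
  set w : (_ : ℕ) × ℕ → ℝ := fun p => ((F p.1 - 1 : ℕ) : ℝ) / (K N : ℝ) with hw
  have hwpos : ∀ p ∈ s, 0 < w p := by
    intro p hp
    simp only [hs, Finset.mem_sigma, Finset.mem_Icc] at hp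
    have h2 : 2 ≤ F p.1 := F_ge_two hp.1.1
    have : (0 : ℝ) < ((F p.1 - 1 : ℕ) : ℝ) := by
      have : 1 ≤ F p.1 - 1 := by omega
      exact_mod_cast Nat.lt_of_lt_of_le Nat.zero_lt_one this
    exact div_pos this hKR
  have hfnn : ∀ p ∈ s, 0 ≤ f p := fun p _ => hM0 p.1 p.2
  have hfs : ∑ p ∈ s, f p = 1 := by
    rw [hs, Finset.sum_sigma]; exact hMsum
  have hws : ∑ p ∈ s, w p = 1 := by
    rw [hs, Finset.sum_sigma]
    have : ∀ i ∈ Finset.Icc 1 N, ∑ j ∈ Finset.range (P N i),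
        w ⟨i, j⟩ = ((P N i * (F i - 1) : ℕ) : ℝ) / (K N : ℝ) := by
      intro i hi
      simp only [hw]
      rw [Finset.sum_const, Finset.card_range, nsmul_eq_mul]
      push_cast
      ring
    rw [Finset.sum_congr rfl this, ← Finset.sum_div]
    rw [← Nat.cast_sum]
    show ((K N : ℕ) : ℝ) / (K N : ℝ) = 1
    exact div_self (ne_of_gt hKR)
  -- rewrite entropy
  have hterm : ∀ p ∈ s, f p * Real.log (f p / ((F p.1 - 1 : ℕ) : ℝ))
      = f p * Real.log (f p / w p) - f p * Real.log (K N : ℝ) := by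
    intro p hp
    rcases eq_or_lt_of_le (hfnn p hp) with h0 | h0
    · simp [← h0]
    · have hwp := hwpos p hp
      have h1 : f p / ((F p.1 - 1 : ℕ) : ℝ) = (f p / w p) / (K N : ℝ) := by
        rw [hw]
        have : ((F p.1 - 1 : ℕ) : ℝ) ≠ 0 := by
          have := hwp
          simp only [hw] at this
          intro h; rw [h] at this; simp at this
        field_simp
      rw [h1, Real.log_div (by positivity) (ne_of_gt hKR)]
      ring
  have hLHS : -∑ i ∈ Finset.Icc 1 N, ∑ j ∈ Finset.range (P N i),
        M i j * Real.log (M i j / ((F i - 1 : ℕ) : ℝ))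
      = Real.log (K N : ℝ) - ∑ p ∈ s, f p * Real.log (f p / w p) := by
    have : ∑ i ∈ Finset.Icc 1 N, ∑ j ∈ Finset.range (P N i),
        M i j * Real.log (M i j / ((F i - 1 : ℕ) : ℝ))
        = ∑ p ∈ s, f p * Real.log (f p / ((F p.1 - 1 : ℕ) : ℝ)) := by
      rw [hs, Finset.sum_sigma]
    rw [this, Finset.sum_congr rfl hterm, Finset.sum_sub_distrib, ← Finset.sum_mul, hfs]
    ring
  rw [hLHS]
  have hgibbs := gibbs s f w hfnn hwpos hfs hws
  constructor
  · intro h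
    have hsum0 : ∑ p ∈ s, f p * Real.log (f p / w p) = 0 := by linarith
    intro i hi j hj
    exact hgibbs.1 hsum0 ⟨i, j⟩ (by simp [hs, Finset.mem_sigma, hi, hj])
  · intro h
    have : ∀ p ∈ s, f p = w p := by
      intro p hp
      simp only [hs, Finset.mem_sigma] at hp
      exact h p.1 hp.1 p.2 hp.2
    rw [hgibbs.2 this]
    ring
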